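/- arXiv:math/9904173 — 6 statements merged into one kernel-verified Lean document; each statement's English description precedes it below -/
import Mathlib

section
/- In the algebra Pol(ℂ)_q generated by z, z* with relation z*z = q²zz* + (1−q²) (where 0 < q < 1), the monomials z^j z*^k for j,k ∈ ℤ₊ form a basis of Pol(ℂ)_q as a complex vector space. -/
/-- The defining relation of `Pol(ℂ)_q`: `z* z = q² z z* + (1 - q²)`.
Generator `0` is `z`, generator `1` is `z*`. -/
inductive PolRel (q : ℝ) : FreeAlgebra ℂ (Fin 2) → FreeAlgebra ℂ (Fin 2) → Prop
  | rel : PolRel q (FreeAlgebra.ι ℂ 1 * FreeAlgebra.ι ℂ 0)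
      ((q ^ 2 : ℂ) • (FreeAlgebra.ι ℂ 0 * FreeAlgebra.ι ℂ 1) + ((1 : ℂ) - (q ^ 2 : ℂ)) • 1)

/-- `Pol(ℂ)_q`, the unital ℂ-algebra with generators `z, z*` and the single
relation `z* z = q² z z* + 1 - q²`. -/
abbrev PolC (q : ℝ) : Type := RingQuot (PolRel q)

/-- The generator `z` of `Pol(ℂ)_q`. -/
noncomputable def Pz (q : ℝ) : PolC q := RingQuot.mkAlgHom ℂ (PolRel q) (FreeAlgebra.ι ℂ 0)

/-- The generator `z*` of `Pol(ℂ)_q`. -/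
noncomputable def Pw (q : ℝ) : PolC q := RingQuot.mkAlgHom ℂ (PolRel q) (FreeAlgebra.ι ℂ 1)

/-! Moving `z*` to the right with the relation gives
`z* z^(j+1) = q^(2(j+1)) z^(j+1) z* + (1 - q^(2(j+1))) z^j`, so the span of the monomials contains
`1` and is stable under left multiplication by both generators, hence is everything.
For independence, let `z` and `z*` act on the free module with basis `e (j, k)` the way left
multiplication would act on `z^j z*^k` if the monomials were a basis. These operators satisfy the
defining relation, and `z^j z*^k` maps `e (0, 0)` to `e (j, k)`. -/

noncomputable section

open Finsupp Set

theorem mul_pow_succ_of_mul_eq_smul_add {R A : Type*} [CommRing R] [Ring A] [Algebra R A]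
    {a b : A} {t : R}
    (h : b * a = t • (a * b) + (1 - t) • 1) (n : ℕ) :
    b * a ^ (n + 1) = t ^ (n + 1) • (a ^ (n + 1) * b) + (1 - t ^ (n + 1)) • a ^ n := by
  induction n with
  | zero => simpa using h
  | succ n ih =>
    calc b * a ^ (n + 2) = b * a ^ (n + 1) * a := by rw [mul_assoc, ← pow_succ]
      _ = t ^ (n + 1) • (a ^ (n + 1) * (b * a)) + (1 - t ^ (n + 1)) • a ^ (n + 1) := by
          rw [ih, add_mul, smul_mul_assoc, smul_mul_assoc, mul_assoc, ← pow_succ]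
      _ = t ^ (n + 2) • (a ^ (n + 2) * b) + (1 - t ^ (n + 2)) • a ^ (n + 1) := by
          rw [h, mul_add, mul_smul_comm, mul_smul_comm, ← mul_assoc, ← pow_succ, mul_one]
          module

theorem Submodule.span_range_eq_top_of_mul_mem {R A ι : Type*} [CommSemiring R] [Semiring A]
    [Algebra R A] {s : Set A} (hs : Algebra.adjoin R s = ⊤) {v : ι → A}
    (h1 : 1 ∈ span R (range v)) (hmul : ∀ a ∈ s, ∀ i, a * v i ∈ span R (range v)) :
    span R (range v) = ⊤ := by
  set M := span R (range v)
  have hgen : ∀ a ∈ s, M ≤ M.comap (LinearMap.mulLeft R a) := fun a ha =>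
    span_le.2 <| range_subset_iff.2 (hmul a ha)
  have hadj : ∀ x ∈ Algebra.adjoin R s, ∀ m ∈ M, x * m ∈ M := by
    intro x hx
    induction hx using Algebra.adjoin_induction with
    | mem a ha => exact fun m hm => hgen a ha hm
    | algebraMap r => simpa [Algebra.algebraMap_eq_smul_one] using fun m hm => M.smul_mem r hm
    | add x y _ _ hx hy => exact fun m hm => add_mul x y m ▸ M.add_mem (hx m hm) (hy m hm)
    | mul x y _ _ hx hy => exact fun m hm => (mul_assoc x y m).symm ▸ hx _ (hy m hm)
  refine eq_top_iff.2 fun x _ => ?_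
  simpa using hadj x (hs ▸ Algebra.mem_top) 1 h1

namespace PolC

variable {R : Type*} [CommRing R]

def modelZ : Module.End R ((ℕ × ℕ) →₀ R) :=
  linearCombination R fun jk => single (jk.1 + 1, jk.2) 1

/-- At `j = 0` the truncated `j - 1` is harmless: its coefficient `1 - t ^ 0` vanishes. -/
def modelW (t : R) : Module.End R ((ℕ × ℕ) →₀ R) :=
  linearCombination R fun jk =>
    t ^ jk.1 • single (jk.1, jk.2 + 1) 1 + (1 - t ^ jk.1) • single (jk.1 - 1, jk.2) 1

theorem modelZ_single (j k : ℕ) : modelZ (single (j, k) (1 : R)) = single (j + 1, k) 1 := by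
  simp [modelZ]

theorem modelW_single (t : R) (j k : ℕ) :
    modelW t (single (j, k) 1) =
      t ^ j • single (j, k + 1) 1 + (1 - t ^ j) • single (j - 1, k) (1 : R) := by
  simp [modelW]

theorem modelW_mul_modelZ (t : R) :
    modelW t * modelZ = t • (modelZ * modelW t) + (1 - t) • 1 := by
  refine (Finsupp.basisSingleOne (R := R) (ι := ℕ × ℕ)).ext fun ⟨j, k⟩ => ?_
  simp only [coe_basisSingleOne, Module.End.mul_apply, LinearMap.add_apply,
    LinearMap.smul_apply, Module.End.one_apply, modelZ_single, modelW_single, map_add,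
    map_smul]
  rcases j with _ | j
  · simp
  · simp only [Nat.add_sub_cancel]
    module

theorem modelZ_pow_modelW_pow_single_zero (t : R) (j k : ℕ) :
    (modelZ ^ j * modelW t ^ k : Module.End R _) (single (0, 0) 1) = single (j, k) 1 := by
  have hW : ∀ k, (modelW t ^ k) (single (0, 0) 1) = single (0, k) 1 := by
    intro k
    induction k with
    | zero => rfl
    | succ k ih => rw [pow_succ', Module.End.mul_apply, ih, modelW_single]; simp
  have hZ : ∀ j, (modelZ ^ j) (single (0, k) 1) = single (j, k) (1 : R) := by
    intro j
    induction j with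
    | zero => rfl
    | succ j ih => rw [pow_succ', Module.End.mul_apply, ih, modelZ_single]
  rw [Module.End.mul_apply, hW, hZ]

theorem Pw_mul_Pz (q : ℝ) :
    Pw q * Pz q = (q : ℂ) ^ 2 • (Pz q * Pw q) + (1 - (q : ℂ) ^ 2) • 1 := by
  simpa [Pz, Pw] using RingQuot.mkAlgHom_rel ℂ (PolRel.rel (q := q))

def lift (q : ℝ) {A : Type*} [Ring A] [Algebra ℂ A] (a b : A)
    (h : b * a = (q : ℂ) ^ 2 • (a * b) + (1 - (q : ℂ) ^ 2) • 1) : PolC q →ₐ[ℂ] A :=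
  RingQuot.liftAlgHom ℂ ⟨FreeAlgebra.lift ℂ ![a, b], by rintro _ _ ⟨⟩; simpa using h⟩

section Lift

variable (q : ℝ) {A : Type*} [Ring A] [Algebra ℂ A] (a b : A)
  (h : b * a = (q : ℂ) ^ 2 • (a * b) + (1 - (q : ℂ) ^ 2) • 1)

@[simp]
theorem lift_Pz : lift q a b h (Pz q) = a := by
  simp [lift, Pz]

@[simp]
theorem lift_Pw : lift q a b h (Pw q) = b := by
  simp [lift, Pw]

end Lift

theorem adjoin_Pz_Pw (q : ℝ) : Algebra.adjoin ℂ {Pz q, Pw q} = ⊤ := by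
  have hgen : RingQuot.mkAlgHom ℂ (PolRel q) ∘ FreeAlgebra.ι ℂ = ![Pz q, Pw q] := by
    ext i; fin_cases i <;> rfl
  rw [← Matrix.range_cons_cons_empty, ← hgen, range_comp, Algebra.adjoin_image,
    FreeAlgebra.adjoin_range_ι, Algebra.map_top, AlgHom.range_eq_top]
  exact RingQuot.mkAlgHom_surjective ℂ (PolRel q)

theorem linearIndependent_monomials (q : ℝ) :
    LinearIndependent ℂ fun jk : ℕ × ℕ => Pz q ^ jk.1 * Pw q ^ jk.2 := by
  let ρ := lift q modelZ (modelW ((q : ℂ) ^ 2)) (modelW_mul_modelZ _)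
  let L : PolC q →ₗ[ℂ] (ℕ × ℕ) →₀ ℂ := (LinearMap.applyₗ (single (0, 0) 1)).comp ρ.toLinearMap
  refine LinearIndependent.of_comp L ?_
  convert (Finsupp.basisSingleOne (R := ℂ) (ι := ℕ × ℕ)).linearIndependent using 1
  ext1 ⟨j, k⟩
  simpa [L, ρ] using modelZ_pow_modelW_pow_single_zero _ j k

theorem span_monomials_eq_top (q : ℝ) :
    Submodule.span ℂ (range fun jk : ℕ × ℕ => Pz q ^ jk.1 * Pw q ^ jk.2) = ⊤ := by
  set M := Submodule.span ℂ (range fun jk : ℕ × ℕ => Pz q ^ jk.1 * Pw q ^ jk.2)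
  have hmem : ∀ j k, Pz q ^ j * Pw q ^ k ∈ M := fun j k => Submodule.subset_span ⟨(j, k), rfl⟩
  refine Submodule.span_range_eq_top_of_mul_mem (adjoin_Pz_Pw q) (by simpa using hmem 0 0) ?_
  rintro a (rfl | rfl) ⟨j, k⟩
  · simpa [← mul_assoc, ← pow_succ'] using hmem (j + 1) k
  · rcases j with _ | j
    · simpa [← pow_succ'] using hmem 0 (k + 1)
    · rw [← mul_assoc, mul_pow_succ_of_mul_eq_smul_add (Pw_mul_Pz q), add_mul, smul_mul_assoc,
        smul_mul_assoc, mul_assoc, ← pow_succ']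
      exact M.add_mem (M.smul_mem _ (hmem _ _)) (M.smul_mem _ (hmem _ _))

end PolC

end

theorem monomials_form_basis_general (q : ℝ) :
    LinearIndependent ℂ (fun jk : ℕ × ℕ => Pz q ^ jk.1 * Pw q ^ jk.2) ∧
    Submodule.span ℂ (Set.range fun jk : ℕ × ℕ => Pz q ^ jk.1 * Pw q ^ jk.2) = ⊤ :=
  ⟨PolC.linearIndependent_monomials q, PolC.span_monomials_eq_top q⟩

/-- the monomials `z^j z*^k`, `j, k ∈ ℤ₊`, form a basis of the
complex vector space `Pol(ℂ)_q`: they are linearly independent and span. -/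
theorem monomials_form_basis (q : ℝ) (hq0 : 0 < q) (hq1 : q < 1) :
    LinearIndependent ℂ (fun jk : ℕ × ℕ => Pz q ^ jk.1 * Pw q ^ jk.2) ∧
    Submodule.span ℂ (Set.range fun jk : ℕ × ℕ => Pz q ^ jk.1 * Pw q ^ jk.2) = ⊤ :=
  monomials_form_basis_general q
end

section
/- With t = q^{4α}, the operators ẑ and ẑ* on the q-weighted Bergman space act on monomials by (ẑ*ẑ) z^k = ((1−q^{2(k+1)})/(1−tq^{2k+2})) z^k and (ẑẑ*) z^k = ((1−q^{2k})/(1−tq^{2k})) z^k, so ẑ*ẑ − q² ẑẑ* converges to (1−q²)·Id as t → 0 in the strong sense on each monomial. -/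
open Finset

def qPoch (a x : ℝ) (k : ℕ) : ℝ := ∏ i ∈ range k, (1 - x ^ i * a)

/-- The weight `(q²;q²)_k / (q^{4α+2};q²)_k` written with `t = q^{4α}`:
`(q^{4α+2};q²)_k = ∏_{i<k}(1 - t q^{2i+2})`. -/
noncomputable def wgtT (q t : ℝ) (k : ℕ) : ℝ :=
  qPoch (q ^ 2) (q ^ 2) k / ∏ i ∈ range k, (1 - t * q ^ (2 * i + 2))

/-- The inner product on `ℂ[z]` (conjugate-linear in the first argument). -/
noncomputable def sesqT (q t : ℝ) (p r : Polynomial ℂ) : ℂ :=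
  ∑ k ∈ p.support, (starRingEnd ℂ) (p.coeff k) * r.coeff k * (wgtT q t k : ℂ)

lemma qP_pos {q : ℝ} (hq0 : 0 < q) (hq1 : q < 1) (k : ℕ) : 0 < qPoch (q^2) (q^2) k := by
  apply Finset.prod_pos; intro i _
  have h1 : (q:ℝ)^2 < 1 := by nlinarith
  have h2 : ((q:ℝ)^2)^i ≤ 1 := pow_le_one₀ (by positivity) h1.le
  nlinarith [pow_nonneg (sq_nonneg q) i]

lemma den_pos {q t : ℝ} (hq0 : 0 < q) (hq1 : q < 1) (ht0 : 0 < t) (ht1 : t < 1) (k : ℕ) :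
    0 < ∏ i ∈ range k, (1 - t * q ^ (2 * i + 2)) := by
  apply Finset.prod_pos; intro i _
  have h2 : (q:ℝ)^(2*i+2) ≤ 1 := pow_le_one₀ hq0.le hq1.le
  nlinarith [pow_pos hq0 (2*i+2)]

lemma wgt_pos {q t : ℝ} (hq0 : 0 < q) (hq1 : q < 1) (ht0 : 0 < t) (ht1 : t < 1) (k : ℕ) :
    0 < wgtT q t k :=
  div_pos (qP_pos hq0 hq1 k) (den_pos hq0 hq1 ht0 ht1 k)

lemma sesq_Xpow (q t : ℝ) (p : Polynomial ℂ) (j : ℕ) :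
    sesqT q t p (Polynomial.X ^ j) = (starRingEnd ℂ) (p.coeff j) * (wgtT q t j : ℂ) := by
  unfold sesqT
  simp only [Polynomial.coeff_X_pow, mul_ite, mul_one, mul_zero, ite_mul, zero_mul]
  rw [Finset.sum_ite_eq' p.support j (fun k => (starRingEnd ℂ) (p.coeff k) * (wgtT q t k : ℂ))]
  split_ifs with h
  · rfl
  · rw [Polynomial.notMem_support_iff.mp h]; simp

lemma wgt_ratio {q t : ℝ} (hq0 : 0 < q) (hq1 : q < 1) (ht0 : 0 < t) (ht1 : t < 1) (k : ℕ) :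
    wgtT q t (k+1) / wgtT q t k = (1 - q ^ (2*(k+1))) / (1 - t * q ^ (2*k+2)) := by
  have hP := qP_pos hq0 hq1 k
  have hQ := den_pos hq0 hq1 ht0 ht1 k
  have hb : (0:ℝ) < 1 - t * q^(2*k+2) := by
    have h2 : (q:ℝ)^(2*k+2) ≤ 1 := pow_le_one₀ hq0.le hq1.le
    nlinarith [pow_pos hq0 (2*k+2)]
  have he : ((q:ℝ)^2)^k * q^2 = q^(2*(k+1)) := by
    rw [← pow_mul, ← pow_add]; ring_nf
  unfold wgtT qPoch
  unfold qPoch at hP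
  rw [Finset.prod_range_succ, Finset.prod_range_succ, he]
  field_simp
  have hP2 : (∏ x ∈ range k, (1 - q ^ 2 * (q ^ 2) ^ x)) ≠ 0 := by
    rw [show (∏ x ∈ range k, (1 - q ^ 2 * (q ^ 2) ^ x)) = ∏ i ∈ range k, (1 - (q ^ 2) ^ i * q ^ 2) from
      Finset.prod_congr rfl (fun x _ => by ring)]
    exact hP.ne'
  rw [mul_div_cancel_left₀ _ hP2]

lemma key_coeff (q t : ℝ) (hq0 : 0 < q) (hq1 : q < 1) (ht0 : 0 < t) (ht1 : t < 1)
    (A : Polynomial ℂ →ₗ[ℂ] Polynomial ℂ)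
    (hA : ∀ u v : Polynomial ℂ, sesqT q t (A u) v = sesqT q t u (Polynomial.X * v))
    (m j : ℕ) :
    (A (Polynomial.X ^ m)).coeff j =
      if j + 1 = m then ((wgtT q t m / wgtT q t j : ℝ) : ℂ) else 0 := by
  have h1 := hA (Polynomial.X ^ m) (Polynomial.X ^ j)
  rw [sesq_Xpow, show (Polynomial.X : Polynomial ℂ) * Polynomial.X ^ j = Polynomial.X ^ (j+1) by
    rw [← pow_succ'], sesq_Xpow, Polynomial.coeff_X_pow] at h1
  have h1' := congrArg (starRingEnd ℂ) h1
  simp only [map_mul, Complex.conj_conj, Complex.conj_ofReal, apply_ite, map_one, map_zero] at h1'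
  have hwj : ((wgtT q t j : ℝ) : ℂ) ≠ 0 := by
    exact_mod_cast (wgt_pos hq0 hq1 ht0 ht1 j).ne'
  split_ifs with h
  · rw [if_pos h, one_mul] at h1'
    subst h
    rw [Complex.ofReal_div, eq_div_iff hwj]
    exact h1'
  · rw [if_neg h, zero_mul] at h1'
    exact (mul_eq_zero.mp h1').resolve_right hwj

lemma A_Xpow (q t : ℝ) (hq0 : 0 < q) (hq1 : q < 1) (ht0 : 0 < t) (ht1 : t < 1)
    (A : Polynomial ℂ →ₗ[ℂ] Polynomial ℂ)
    (hA : ∀ u v : Polynomial ℂ, sesqT q t (A u) v = sesqT q t u (Polynomial.X * v))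
    (k : ℕ) :
    A (Polynomial.X ^ (k+1)) =
      ((wgtT q t (k+1) / wgtT q t k : ℝ) : ℂ) • Polynomial.X ^ k := by
  ext j
  rw [key_coeff q t hq0 hq1 ht0 ht1 A hA]
  rw [Polynomial.coeff_smul, Polynomial.coeff_X_pow]
  by_cases h : j = k
  · subst h; simp
  · rw [if_neg (show ¬ j + 1 = k + 1 by omega), if_neg h]; simp

/-- with `t = q^{4α}`, for any `A` satisfying the adjoint relation for
`ẑ` (so `A = ẑ*`), one has the diagonal actions
`ẑ*ẑ z^k = ((1-q^{2(k+1)})/(1-tq^{2k+2})) z^k` and `ẑẑ* z^k = ((1-q^{2k})/(1-tq^{2k})) z^k`,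
and for each `k` the eigenvalue of `ẑ*ẑ - q²ẑẑ*` on `z^k` tends to `1 - q²` as `t → 0`. -/
theorem zstarz_relation (q : ℝ) (hq0 : 0 < q) (hq1 : q < 1) :
    (∀ t ∈ Set.Ioo (0 : ℝ) 1, ∀ A : Polynomial ℂ →ₗ[ℂ] Polynomial ℂ,
      (∀ u v : Polynomial ℂ, sesqT q t (A u) v = sesqT q t u (Polynomial.X * v)) →
      ∀ k : ℕ,
        A (Polynomial.X * Polynomial.X ^ k) =
          (((1 - q ^ (2 * (k + 1))) / (1 - t * q ^ (2 * k + 2)) : ℝ) : ℂ) •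
            Polynomial.X ^ k ∧
        Polynomial.X * A (Polynomial.X ^ k) =
          (((1 - q ^ (2 * k)) / (1 - t * q ^ (2 * k)) : ℝ) : ℂ) • Polynomial.X ^ k) ∧
    (∀ k : ℕ, Filter.Tendsto
      (fun t : ℝ =>
        (1 - q ^ (2 * (k + 1))) / (1 - t * q ^ (2 * k + 2)) -
          q ^ 2 * ((1 - q ^ (2 * k)) / (1 - t * q ^ (2 * k))))
      (nhdsWithin 0 (Set.Ioo (0 : ℝ) 1)) (nhds (1 - q ^ 2))) := by
  constructor
  · rintro t ⟨ht0, ht1⟩ A hA k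
    constructor
    · rw [show (Polynomial.X : Polynomial ℂ) * Polynomial.X ^ k = Polynomial.X ^ (k+1) by
        rw [← pow_succ']]
      rw [A_Xpow q t hq0 hq1 ht0 ht1 A hA k, wgt_ratio hq0 hq1 ht0 ht1 k]
    · cases k with
      | zero =>
        have h0 : A (Polynomial.X ^ 0) = 0 := by
          ext j
          rw [key_coeff q t hq0 hq1 ht0 ht1 A hA]
          simp
        rw [h0]
        simp
      | succ m =>
        rw [A_Xpow q t hq0 hq1 ht0 ht1 A hA m, wgt_ratio hq0 hq1 ht0 ht1 m]
        rw [Polynomial.smul_eq_C_mul, Polynomial.smul_eq_C_mul]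
        rw [show 2*m+2 = 2*(m+1) by ring]
        ring
  · intro k
    have hcont : ContinuousAt
        (fun t : ℝ =>
          (1 - q ^ (2 * (k + 1))) / (1 - t * q ^ (2 * k + 2)) -
            q ^ 2 * ((1 - q ^ (2 * k)) / (1 - t * q ^ (2 * k)))) 0 := by
      have h1 : (fun t : ℝ => 1 - t * q ^ (2*k+2)) 0 ≠ 0 := by norm_num
      have h2 : (fun t : ℝ => 1 - t * q ^ (2*k)) 0 ≠ 0 := by norm_num
      have hd1 : ContinuousAt (fun t : ℝ => 1 - t * q ^ (2*k+2)) 0 := by fun_prop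
      have hd2 : ContinuousAt (fun t : ℝ => 1 - t * q ^ (2*k)) 0 := by fun_prop
      exact (continuousAt_const.div hd1 h1).sub
        (continuousAt_const.mul (continuousAt_const.div hd2 h2))
    have hval : (1 - q ^ (2 * (k + 1))) / (1 - (0:ℝ) * q ^ (2 * k + 2)) -
        q ^ 2 * ((1 - q ^ (2 * k)) / (1 - (0:ℝ) * q ^ (2 * k))) = 1 - q ^ 2 := by
      norm_num; ring
    refine Filter.Tendsto.mono_left ?_ nhdsWithin_le_nhds
    have := hcont.tendsto
    rwa [hval] at this
end

section
/- The q-Laplace–Beltrami operator □ on Pol(ℂ)_q satisfies the identity (1−zz*)² ∂^{(l)}/∂z* ∂^{(l)}/∂z f = q² ∂^{(r)}/∂z* (∂^{(r)}f/∂z) (1−zz*)², i.e. the two natural expressions for □ agree on all of Pol(ℂ)_q. -/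
lemma polc_rel (q : ℝ) :
    Pw q * Pz q = ((q : ℂ) ^ 2) • (Pz q * Pw q) + ((1 : ℂ) - (q : ℂ) ^ 2) • 1 := by
  have h := RingQuot.mkAlgHom_rel ℂ (PolRel.rel (q := q))
  simpa [Pz, Pw, map_mul, map_add, map_smul, map_one] using h

lemma polc_induction (q : ℝ) {P : PolC q → Prop}
    (h0 : ∀ c : ℂ, P (algebraMap ℂ (PolC q) c))
    (hz : P (Pz q)) (hw : P (Pw q))
    (hmul : ∀ a b, P a → P b → P (a * b))
    (hadd : ∀ a b, P a → P b → P (a + b)) :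
    ∀ f : PolC q, P f := by
  intro f
  obtain ⟨a, rfl⟩ := RingQuot.mkAlgHom_surjective ℂ (PolRel q) f
  induction a with
  | grade0 c => simpa using h0 c
  | grade1 i =>
    fin_cases i
    · exact hz
    · exact hw
  | mul a b ha hb => rw [map_mul]; exact hmul _ _ ha hb
  | add a b ha hb => rw [map_add]; exact hadd _ _ ha hb

/-- `(1-zw) z = q² z (1-zw)` -/
lemma polc_yz (q : ℝ) :
    (1 - Pz q * Pw q) * Pz q = ((q : ℂ) ^ 2) • (Pz q * (1 - Pz q * Pw q)) := by
  have h := polc_rel q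
  calc (1 - Pz q * Pw q) * Pz q
      = Pz q - Pz q * (Pw q * Pz q) := by rw [sub_mul, one_mul, mul_assoc]
    _ = Pz q - Pz q * (((q : ℂ) ^ 2) • (Pz q * Pw q) + ((1 : ℂ) - (q : ℂ) ^ 2) • 1) := by
        rw [h]
    _ = ((q : ℂ) ^ 2) • (Pz q * (1 - Pz q * Pw q)) := by
        simp only [mul_add, mul_smul_comm, mul_one, smul_sub, mul_sub, sub_smul, one_smul]
        module

/-- `w (1-zw) = q² (1-zw) w` -/
lemma polc_wy (q : ℝ) :
    Pw q * (1 - Pz q * Pw q) = ((q : ℂ) ^ 2) • ((1 - Pz q * Pw q) * Pw q) := by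
  have h := polc_rel q
  calc Pw q * (1 - Pz q * Pw q)
      = Pw q - (Pw q * Pz q) * Pw q := by rw [mul_sub, mul_one, mul_assoc]
    _ = Pw q - (((q : ℂ) ^ 2) • (Pz q * Pw q) + ((1 : ℂ) - (q : ℂ) ^ 2) • 1) * Pw q := by
        rw [h]
    _ = ((q : ℂ) ^ 2) • ((1 - Pz q * Pw q) * Pw q) := by
        simp only [add_mul, smul_mul_assoc, one_mul, smul_sub, sub_mul, mul_sub, sub_smul,
          one_smul]
        module

/-- the two expressions for the q-Laplace–Beltrami operator agree:
`(1-zz*)² ∂⁽ˡ⁾/∂z* ∂⁽ˡ⁾f/∂z = q² ∂⁽ʳ⁾/∂z* (∂⁽ʳ⁾f/∂z) (1-zz*)²` for all `f ∈ Pol(ℂ)_q`.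

`Ω¹` is modelled as `Pol(ℂ)_q × Pol(ℂ)_q` (the pair `(f,g)` stands for `dz·f + dz*·g`);
the commutation relations give left multiplication through the algebra map `φ`
(`φ(z) = q⁻²z`, `φ(z*) = q²z*`), left partials are the components of `d`, and right
partials are obtained via the algebra map `σ` (`σ(z) = q²z`, `σ(z*) = q⁻²z*`) that
moves coefficients across `dz, dz*`: `∂⁽ʳ⁾f/∂x = σ(∂⁽ˡ⁾f/∂x)`. -/
theorem box_two_forms (q : ℝ) (hq0 : 0 < q) (hq1 : q < 1)
    (φ σ : PolC q →ₐ[ℂ] PolC q)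
    (hφz : φ (Pz q) = ((q : ℂ) ^ (-2 : ℤ)) • Pz q)
    (hφw : φ (Pw q) = ((q : ℂ) ^ (2 : ℤ)) • Pw q)
    (hσz : σ (Pz q) = ((q : ℂ) ^ (2 : ℤ)) • Pz q)
    (hσw : σ (Pw q) = ((q : ℂ) ^ (-2 : ℤ)) • Pw q)
    (d : PolC q →ₗ[ℂ] PolC q × PolC q)
    (hdz : d (Pz q) = (1, 0))
    (hdw : d (Pw q) = (0, 1))
    (hLeib : ∀ f g : PolC q,
      d (f * g) = ((d f).1 * g + φ f * (d g).1, (d f).2 * g + φ f * (d g).2)) :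
    ∀ f : PolC q,
      (1 - Pz q * Pw q) ^ 2 * (d ((d f).1)).2 =
        ((q : ℂ) ^ 2) • (σ ((d (σ ((d f).1))).2) * (1 - Pz q * Pw q) ^ 2) := by
  have hqC : (q : ℂ) ≠ 0 := by exact_mod_cast hq0.ne'
  have hq22 : (q : ℂ) ^ (2 : ℤ) * (q : ℂ) ^ (-2 : ℤ) = 1 := by
    rw [← zpow_add₀ hqC]; norm_num
  have hq22' : (q : ℂ) ^ (-2 : ℤ) * (q : ℂ) ^ (2 : ℤ) = 1 := by
    rw [← zpow_add₀ hqC]; norm_num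
  -- φ and σ commute
  have hφσ : ∀ f, φ (σ f) = σ (φ f) := by
    refine polc_induction q (fun c => ?_) ?_ ?_ (fun a b ha hb => ?_) (fun a b ha hb => ?_)
    · simp [AlgHom.commutes]
    · simp only [map_smul, hσz, hφz, smul_smul]; rw [mul_comm]
    · simp only [map_smul, hσw, hφw, smul_smul]; rw [mul_comm]
    · simp only [map_mul, ha, hb]
    · simp only [map_add, ha, hb]
  -- d kills 1 and scalars
  have hd1 : d (1 : PolC q) = 0 := by
    have h := hLeib 1 1
    rw [mul_one] at h
    have h1 : (d (1:PolC q)).1 = (d (1:PolC q)).1 + (d (1:PolC q)).1 := by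
      conv_lhs => rw [h]; simp
    have h2 : (d (1:PolC q)).2 = (d (1:PolC q)).2 + (d (1:PolC q)).2 := by
      conv_lhs => rw [h]; simp
    have e1 : (d (1:PolC q)).1 = 0 := by
      have := left_eq_add.mp h1; exact this
    have e2 : (d (1:PolC q)).2 = 0 := by
      have := left_eq_add.mp h2; exact this
    exact Prod.ext e1 e2
  have hdalg : ∀ c : ℂ, d (algebraMap ℂ (PolC q) c) = 0 := by
    intro c
    rw [Algebra.algebraMap_eq_smul_one, map_smul, hd1, smul_zero]
  -- intertwining of d and σ
  have hint : ∀ f : PolC q,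
      (d (σ f)).1 = ((q : ℂ) ^ (2 : ℤ)) • σ ((d f).1) ∧
      (d (σ f)).2 = ((q : ℂ) ^ (-2 : ℤ)) • σ ((d f).2) := by
    refine polc_induction q (fun c => ?_) ?_ ?_ (fun a b ha hb => ?_) (fun a b ha hb => ?_)
    · simp [AlgHom.commutes, hdalg]
    · rw [hσz, map_smul, hdz]
      constructor <;> simp
    · rw [hσw, map_smul, hdw]
      constructor <;> simp
    · obtain ⟨ha1, ha2⟩ := ha
      obtain ⟨hb1, hb2⟩ := hb
      rw [map_mul, hLeib (σ a) (σ b), hLeib a b]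
      constructor
      · simp only [ha1, hb1, hφσ, map_mul, map_add, smul_mul_assoc, mul_smul_comm, smul_add]
      · simp only [ha2, hb2, hφσ, map_mul, map_add, smul_mul_assoc, mul_smul_comm, smul_add]
    · obtain ⟨ha1, ha2⟩ := ha
      obtain ⟨hb1, hb2⟩ := hb
      rw [map_add, map_add, map_add]
      constructor
      · simp only [Prod.fst_add, ha1, hb1, map_add, smul_add]
      · simp only [Prod.snd_add, ha2, hb2, map_add, smul_add]
  -- the twist lemma: (1-zw)² h = σ²(h) (1-zw)²
  set y : PolC q := 1 - Pz q * Pw q with hy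
  have hp2 : ((q : ℂ) ^ 2) = (q : ℂ) ^ (2 : ℤ) := by norm_cast
  have hyz := polc_yz q
  have hwy := polc_wy q
  rw [← hy] at hyz hwy
  have hyw : y * Pw q = ((q : ℂ) ^ (-2 : ℤ)) • (Pw q * y) := by
    rw [hwy, smul_smul, hp2, hq22', one_smul]
  have htwist : ∀ h : PolC q, y ^ 2 * h = σ (σ h) * y ^ 2 := by
    refine polc_induction q (fun c => ?_) ?_ ?_ (fun a b ha hb => ?_) (fun a b ha hb => ?_)
    · rw [AlgHom.commutes, AlgHom.commutes]
      rw [Algebra.algebraMap_eq_smul_one, smul_mul_assoc, mul_smul_comm, mul_one, one_mul]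
    · have h2 : y ^ 2 * Pz q = (((q : ℂ) ^ 2) * ((q : ℂ) ^ 2)) • (Pz q * y ^ 2) := by
        calc y ^ 2 * Pz q = y * (y * Pz q) := by rw [sq, mul_assoc]
          _ = ((q : ℂ) ^ 2) • (y * (Pz q * y)) := by rw [hyz, mul_smul_comm]
          _ = ((q : ℂ) ^ 2) • ((y * Pz q) * y) := by rw [mul_assoc]
          _ = ((q : ℂ) ^ 2) • ((((q : ℂ) ^ 2) • (Pz q * y)) * y) := by rw [hyz]
          _ = (((q : ℂ) ^ 2) * ((q : ℂ) ^ 2)) • (Pz q * y ^ 2) := by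
              rw [smul_mul_assoc, smul_smul, mul_assoc, ← pow_two, ← pow_two y]
      rw [h2]
      simp only [map_smul, hσz, smul_smul, smul_mul_assoc]
      norm_cast
    · have h2 : y ^ 2 * Pw q = (((q : ℂ) ^ (-2 : ℤ)) * ((q : ℂ) ^ (-2 : ℤ))) • (Pw q * y ^ 2) := by
        calc y ^ 2 * Pw q = y * (y * Pw q) := by rw [sq, mul_assoc]
          _ = ((q : ℂ) ^ (-2 : ℤ)) • (y * (Pw q * y)) := by rw [hyw, mul_smul_comm]
          _ = ((q : ℂ) ^ (-2 : ℤ)) • ((y * Pw q) * y) := by rw [mul_assoc]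
          _ = ((q : ℂ) ^ (-2 : ℤ)) • ((((q : ℂ) ^ (-2 : ℤ)) • (Pw q * y)) * y) := by rw [hyw]
          _ = (((q : ℂ) ^ (-2 : ℤ)) * ((q : ℂ) ^ (-2 : ℤ))) • (Pw q * y ^ 2) := by
              rw [smul_mul_assoc, smul_smul, mul_assoc, ← pow_two, ← pow_two y]
      rw [h2]
      simp only [map_smul, hσw, smul_smul, smul_mul_assoc]
    · calc y ^ 2 * (a * b) = (y ^ 2 * a) * b := by rw [mul_assoc]
        _ = (σ (σ a) * y ^ 2) * b := by rw [ha]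
        _ = σ (σ a) * (y ^ 2 * b) := by rw [mul_assoc]
        _ = σ (σ a) * (σ (σ b) * y ^ 2) := by rw [hb]
        _ = σ (σ (a * b)) * y ^ 2 := by rw [map_mul, map_mul, mul_assoc]
    · rw [mul_add, ha, hb, map_add, map_add, add_mul]
  -- assemble
  intro f
  have h1 := (hint ((d f).1)).2
  rw [h1, map_smul, smul_mul_assoc, smul_smul, hp2, hq22, one_smul]
  exact htwist ((d ((d f).1)).2)
end

section
/- For each α > 0 with t = q^{4α}, and for any polynomial f ∈ Pol(ℂ)_q, there exists a unique formal series Σ_{j,k≥0} a_{jk} z^j z*^k (the covariant symbol) such that the operator f̂ obtained by substituting ẑ, ẑ* equals Σ a_{jk} ẑ^j ẑ*^k, and the map f ↦ f̂ ↦ covariant symbol recovers the Wick-ordered decomposition: if f = Σ_{j,k} a_{jk} z^j z*^k then the operator Σ a_{jk} ẑ^j ẑ*^k has covariant symbol f. -/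
open Finset Polynomial

noncomputable def wgt (q α : ℝ) (k : ℕ) : ℝ :=
  qPoch (q ^ 2) (q ^ 2) k / qPoch (q ^ (4 * α + 2)) (q ^ 2) k

/-- The inner product `(·,·)_α` on `ℂ[z]`, linear in the first argument. -/
noncomputable def pair (q α : ℝ) (p r : Polynomial ℂ) : ℂ :=
  ∑ k ∈ p.support, p.coeff k * (starRingEnd ℂ) (r.coeff k) * (wgt q α k : ℂ)

/-- `a : ℕ×ℕ → ℂ` is a covariant symbol of the operator `T` on `ℂ[z]`:
`T = Σ_{j,k} a_{jk} ẑ^j ẑ*^k` in the weak topology determined by the functionals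
`A ↦ (Aψ₁, ψ₂)_α`, `ψ₁, ψ₂ ∈ ℂ[z]`. Here `zs` plays the role of `ẑ*`. -/
def IsCovSym (q α : ℝ) (zs : Polynomial ℂ →ₗ[ℂ] Polynomial ℂ)
    (T : Polynomial ℂ → Polynomial ℂ) (a : ℕ × ℕ → ℂ) : Prop :=
  ∀ ψ₁ ψ₂ : Polynomial ℂ,
    pair q α (T ψ₁) ψ₂ =
      ∑' jk : ℕ × ℕ, a jk * pair q α (X ^ jk.1 * (zs ^ jk.2) ψ₁) ψ₂

/-!
Since the weights `wgt q α k` are positive, the adjoint relation determines `ẑ*` on monomials: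
it lowers the degree by one, `ẑ* z^m = (w_m / w_{m-1}) z^{m-1}`. Hence `(ẑ^j ẑ*^k z^m, z^n)_α`
vanishes unless `k ≤ m` and `n = j + m - k`, so every test pair `(z^m, z^n)` sees only finitely
many terms of the series, and the resulting linear system for the coefficients is triangular in
`k`. Existence is linearity of the pairing in its first argument.
-/

lemma wgt_pos_s11 {q α : ℝ} (hq0 : 0 < q) (hq1 : q < 1) (hα : 0 < α) (k : ℕ) :
    0 < wgt q α k := by
  have hq2 : q ^ 2 < 1 := by nlinarith
  have ha : 0 < q ^ (4 * α + 2) := Real.rpow_pos_of_pos hq0 _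
  have ha' : q ^ (4 * α + 2) < 1 := Real.rpow_lt_one hq0.le hq1 (by linarith)
  have hpow : ∀ i : ℕ, (q ^ 2) ^ i ≤ 1 := fun i => pow_le_one₀ (by positivity) hq2.le
  unfold wgt qPoch
  apply div_pos <;> apply Finset.prod_pos <;> intro i _ <;> nlinarith [hpow i]

lemma pair_eq_lsum (q α : ℝ) (p r : ℂ[X]) :
    pair q α p r =
      lsum (fun k => LinearMap.mulRight ℂ (starRingEnd ℂ (r.coeff k) * (wgt q α k : ℂ))) p := by
  simp only [pair, lsum_apply, Polynomial.sum_def, LinearMap.mulRight_apply, mul_assoc]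

lemma pair_sum_smul_left (q α : ℝ) {ι : Type*} (s : Finset ι) (c : ι → ℂ) (p : ι → ℂ[X])
    (r : ℂ[X]) :
    pair q α (∑ i ∈ s, c i • p i) r = ∑ i ∈ s, c i * pair q α (p i) r := by
  simp only [pair_eq_lsum, map_sum, map_smul, smul_eq_mul]

lemma pair_X_pow_right (q α : ℝ) (p : ℂ[X]) (n : ℕ) :
    pair q α p (X ^ n) = p.coeff n * (wgt q α n : ℂ) := by
  rw [pair_eq_lsum, lsum_apply, Polynomial.sum_def, Finset.sum_eq_single n]
  · simp
  · intro k _ hkn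
    simp [coeff_X_pow, hkn]
  · intro hn
    simp [Polynomial.notMem_support_iff.mp hn]

lemma isCovSym_finsupp (q α : ℝ) (zs : ℂ[X] →ₗ[ℂ] ℂ[X]) (f : (ℕ × ℕ) →₀ ℂ) :
    IsCovSym q α zs (fun ψ => ∑ jk ∈ f.support, f jk • (X ^ jk.1 * (zs ^ jk.2) ψ)) f := by
  intro ψ₁ ψ₂
  rw [pair_sum_smul_left, tsum_eq_sum fun jk hjk => by rw [Finsupp.notMem_support_iff.mp hjk, zero_mul]]

section adjoint

variable {q α : ℝ} {zs : ℂ[X] →ₗ[ℂ] ℂ[X]}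

lemma zs_coeff (hw : ∀ k, wgt q α k ≠ 0)
    (hzs : ∀ u v : ℂ[X], pair q α (zs u) v = pair q α u (X * v)) (u : ℂ[X]) (r : ℕ) :
    (zs u).coeff r = u.coeff (r + 1) * ((wgt q α (r + 1) / wgt q α r : ℝ) : ℂ) := by
  have h := hzs u (X ^ r)
  rw [pair_X_pow_right, ← pow_succ', pair_X_pow_right] at h
  have hr : (wgt q α r : ℂ) ≠ 0 := Complex.ofReal_ne_zero.mpr (hw r)
  push_cast
  field_simp
  linear_combination h

lemma zs_pow_coeff (hw : ∀ k, wgt q α k ≠ 0)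
    (hzs : ∀ u v : ℂ[X], pair q α (zs u) v = pair q α u (X * v)) (k : ℕ) (u : ℂ[X]) (r : ℕ) :
    ((zs ^ k) u).coeff r = u.coeff (r + k) * ((wgt q α (r + k) / wgt q α r : ℝ) : ℂ) := by
  induction k generalizing u with
  | zero => simp [div_self (hw r)]
  | succ k ih =>
    have hrk : (wgt q α (r + k) : ℂ) ≠ 0 := Complex.ofReal_ne_zero.mpr (hw (r + k))
    rw [pow_succ, Module.End.mul_apply, ih, zs_coeff hw hzs, ← add_assoc]
    push_cast
    field_simp

lemma pair_X_pow_mul_zs_pow_X_pow (hw : ∀ k, wgt q α k ≠ 0)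
    (hzs : ∀ u v : ℂ[X], pair q α (zs u) v = pair q α u (X * v)) (j k m n : ℕ) :
    pair q α (X ^ j * (zs ^ k) (X ^ m)) (X ^ n) =
      if j ≤ n ∧ n - j + k = m then
        ((wgt q α m / wgt q α (n - j) * wgt q α n : ℝ) : ℂ) else 0 := by
  rw [pair_X_pow_right, coeff_X_pow_mul', zs_pow_coeff hw hzs, coeff_X_pow]
  by_cases hjn : j ≤ n <;> by_cases hm : n - j + k = m <;> simp [hjn, hm]

lemma summable_mul_pair_X_pow_mul_zs_pow (hw : ∀ k, wgt q α k ≠ 0)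
    (hzs : ∀ u v : ℂ[X], pair q α (zs u) v = pair q α u (X * v)) (a : ℕ × ℕ → ℂ) (m n : ℕ) :
    Summable fun jk : ℕ × ℕ => a jk * pair q α (X ^ jk.1 * (zs ^ jk.2) (X ^ m)) (X ^ n) := by
  refine summable_of_ne_finset_zero (s := range (n + 1) ×ˢ range (m + 1)) fun jk hjk => ?_
  rw [pair_X_pow_mul_zs_pow_X_pow hw hzs, if_neg, mul_zero]
  simp only [mem_product, mem_range] at hjk
  omega

/-- Tested on `(ẑ^j ẑ*^k z^m, z^n)` with `m = k`, `n = j`, the series isolates `a_{jk}` once all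
`a_{j'k'}` with `k' < k` vanish, so an induction on `k` applies. -/
lemma eq_zero_of_tsum_mul_pair_X_pow_mul_zs_pow (hw : ∀ k, wgt q α k ≠ 0)
    (hzs : ∀ u v : ℂ[X], pair q α (zs u) v = pair q α u (X * v)) (a : ℕ × ℕ → ℂ)
    (ha : ∀ m n : ℕ, ∑' jk : ℕ × ℕ, a jk * pair q α (X ^ jk.1 * (zs ^ jk.2) (X ^ m)) (X ^ n) = 0) :
    a = 0 := by
  suffices h : ∀ k j, a (j, k) = 0 from funext fun jk => h jk.2 jk.1
  intro k
  induction k using Nat.strong_induction_on with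
  | _ k ih =>
    intro j
    have hsingle := ha k j
    rw [tsum_eq_single (j, k) fun jk hne => ?_, pair_X_pow_mul_zs_pow_X_pow hw hzs,
      if_pos (by omega)] at hsingle
    · refine (mul_eq_zero.mp hsingle).resolve_right ?_
      exact_mod_cast mul_ne_zero (div_ne_zero (hw k) (hw (j - j))) (hw j)
    · obtain ⟨j', k'⟩ := jk
      rcases lt_or_ge k' k with hk | hk
      · rw [ih k' hk j', zero_mul]
      · rw [pair_X_pow_mul_zs_pow_X_pow hw hzs, if_neg, mul_zero]
        simp only [ne_eq, Prod.mk.injEq] at hne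
        omega

lemma IsCovSym.unique (hw : ∀ k, wgt q α k ≠ 0)
    (hzs : ∀ u v : ℂ[X], pair q α (zs u) v = pair q α u (X * v)) {T : ℂ[X] → ℂ[X]}
    {a b : ℕ × ℕ → ℂ} (ha : IsCovSym q α zs T a) (hb : IsCovSym q α zs T b) : a = b := by
  refine sub_eq_zero.mp (eq_zero_of_tsum_mul_pair_X_pow_mul_zs_pow hw hzs _ fun m n => ?_)
  simp only [Pi.sub_apply, sub_mul]
  rw [Summable.tsum_sub (summable_mul_pair_X_pow_mul_zs_pow hw hzs a m n)
    (summable_mul_pair_X_pow_mul_zs_pow hw hzs b m n), ← ha, ← hb, sub_self]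

end adjoint

/-- for any `f = Σ a_{jk} z^j z*^k ∈ Pol(ℂ)_q` (a finitely supported
family of coefficients in the basis `z^j z*^k`), the operator
`f̂ = Σ a_{jk} ẑ^j ẑ*^k` has a unique covariant symbol, namely `f` itself.
Here `zs = ẑ*` is characterized by the adjoint relation `(zs u, v)_α = (u, z·v)_α`. -/
theorem covariant_symbol_exists_unique (q α : ℝ) (hq0 : 0 < q) (hq1 : q < 1) (hα : 0 < α)
    (zs : Polynomial ℂ →ₗ[ℂ] Polynomial ℂ)
    (hzs : ∀ u v : Polynomial ℂ, pair q α (zs u) v = pair q α u (X * v))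
    (f : (ℕ × ℕ) →₀ ℂ) :
    IsCovSym q α zs
        (fun ψ => ∑ jk ∈ f.support, f jk • (X ^ jk.1 * (zs ^ jk.2) ψ)) (⇑f) ∧
      ∀ a : ℕ × ℕ → ℂ,
        IsCovSym q α zs
            (fun ψ => ∑ jk ∈ f.support, f jk • (X ^ jk.1 * (zs ^ jk.2) ψ)) a →
          a = ⇑f := by
  have hw : ∀ k, wgt q α k ≠ 0 := fun k => (wgt_pos_s11 hq0 hq1 hα k).ne'
  exact ⟨isCovSym_finsupp q α zs f,
    fun a ha => ha.unique hw hzs (isCovSym_finsupp q α zs f)⟩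
end

section
/- Define operators I(z^j z*^k) on ℂ[z] ⊗ ℂ[[t]] by I(z^j z*^k): z^m ↦ ((q^{2m};q^{-2})_k / (tq^{2m};q^{-2})_k) z^{m−k+j} for k ≤ m and 0 for k > m, where 1/(tq^{2m};q^{-2})_k is expanded as a formal power series in t. Then the ℂ[[t]]-linear extension Q of I to Pol(ℂ)_q[[t]] is injective. -/
open Finset Polynomial

/-- The prefactor `(q^{2m}; q^{-2})_k = ∏_{i=0}^{k-1} (1 - q^{2m-2i})`. -/
noncomputable def pochDown (q : ℝ) (m k : ℕ) : ℂ :=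
  ∏ i ∈ range k, (1 - (q : ℂ) ^ (2 * (m : ℤ) - 2 * i))

/-- The Taylor expansion in `t` of `1/(tq^{2m}; q^{-2})_k`:
`∏_{i=0}^{k-1} (1 - q^{2m-2i} t)⁻¹ = ∏_{i=0}^{k-1} Σ_n (q^{2m-2i})^n tⁿ`. -/
noncomputable def invSeries (q : ℝ) (m k : ℕ) : PowerSeries ℂ :=
  ∏ i ∈ range k, PowerSeries.mk fun n => ((q : ℂ) ^ (2 * (m : ℤ) - 2 * i)) ^ n

/-- The coefficient of `t^b` in `(q^{2m};q^{-2})_k / (tq^{2m};q^{-2})_k`. -/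
noncomputable def Icoef (q : ℝ) (m k b : ℕ) : ℂ :=
  pochDown q m k * PowerSeries.coeff b (invSeries q m k)

/-- The map `Q`.  An element of `Pol(ℂ)_q[[t]]` is represented by its sequence of
`t`-coefficients `f : ℕ → ((ℕ×ℕ) →₀ ℂ)`, each `t`-coefficient written in the basis
`{z^j z*^k}` of `Pol(ℂ)_q`; an element of `End_ℂ(ℂ[z])[[t]]` is represented by the
sequence of its `t`-coefficients, acting on `ℂ[z]`.  `Q(Σ f_a t^a) = Σ I(f_a) t^a`
where `I(z^j z*^k) : z^m ↦ ((q^{2m};q^{-2})_k/(tq^{2m};q^{-2})_k) z^{m-k+j}` for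
`k ≤ m`, and `0` for `k > m`, the rational function being expanded in powers of `t`. -/
noncomputable def Qmap (q : ℝ) (f : ℕ → ((ℕ × ℕ) →₀ ℂ)) : ℕ → Polynomial ℂ → Polynomial ℂ :=
  fun n p =>
    ∑ a ∈ range (n + 1), ∑ jk ∈ (f a).support,
      f a jk •
        ∑ m ∈ p.support, p.coeff m •
          (if jk.2 ≤ m then Icoef q m jk.2 (n - a) • (X : Polynomial ℂ) ^ (m - jk.2 + jk.1)
           else 0)

/-!
Expanding in `t`, `Q` is triangular: the `tⁿ`-coefficient of `Q f` is `I₀(fₙ)` plus terms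
involving only `f₀, …, fₙ₋₁`, where `I₀(z^j z*^k) z^m = (q^{2m};q^{-2})_k z^{m-k+j}` is the
`t = 0` part of `I`. So it suffices that `I₀` is injective. For `m` large, the coefficient of
`z^{m-k₀+j₀}` in `I₀(c) z^m` is `Σ c_{jk} P_k(q^{2m})` over the `(j, k)` with `j - k = j₀ - k₀`
(on which `k` determines `j`), where `P_k(x) = ∏_{i<k} (1 - q^{-2i} x)` has degree `k`.
A polynomial vanishing at the infinitely many points `q^{2m}` is zero, and polynomials of
distinct degrees are linearly independent.
-/

section QPochhammerSeq

variable {R : Type*} [CommRing R] [IsDomain R] {a : R}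

/-- `∏_{i<k} (1 - aⁱ x)`; at `a = q⁻², x = q^{2m}` this is `(q^{2m}; q^{-2})_k`. -/
noncomputable def qPochhammerSeq (ha : a ≠ 0) : Polynomial.Sequence R where
  elems' k := ∏ i ∈ range k, (1 - C (a ^ i) * X)
  degree_eq' k := by
    have hfactor : ∀ i : ℕ, (1 - C (a ^ i) * X : R[X]).degree = 1 := fun i => by
      rw [degree_sub_eq_right_of_degree_lt, degree_C_mul_X (pow_ne_zero i ha)]
      rw [degree_C_mul_X (pow_ne_zero i ha), degree_one]
      exact zero_lt_one
    rw [degree_prod, sum_congr rfl fun i _ => hfactor i]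
    simp

theorem eval_qPochhammerSeq (ha : a ≠ 0) (x : R) (k : ℕ) :
    eval x (qPochhammerSeq ha k) = ∏ i ∈ range k, (1 - a ^ i * x) := by
  simp [qPochhammerSeq, eval_prod]

end QPochhammerSeq

theorem Polynomial.eq_zero_of_forall_eval_pow_eq_zero {K : Type*} [CommRing K] [IsDomain K]
    {p : K[X]} {x : K} (hx : Function.Injective (x ^ · : ℕ → K)) (M : ℕ)
    (h : ∀ m ≥ M, eval (x ^ m) p = 0) : p = 0 := by
  refine eq_zero_of_infinite_isRoot p (Set.infinite_of_injective_forall_mem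
    (f := fun n => x ^ (n + M)) (hx.comp (add_left_injective M)) fun n => ?_)
  exact h _ (Nat.le_add_left M n)

theorem pochDown_eq_eval {q : ℝ} (hq0 : 0 < q) (m k : ℕ) :
    pochDown q m k = eval (((q : ℂ) ^ 2) ^ m)
      (qPochhammerSeq (inv_ne_zero (pow_ne_zero 2 (Complex.ofReal_ne_zero.2 hq0.ne'))) k) := by
  have hq : (q : ℂ) ≠ 0 := Complex.ofReal_ne_zero.2 hq0.ne'
  rw [eval_qPochhammerSeq, pochDown]
  refine prod_congr rfl fun i _ => ?_
  rw [zpow_sub₀ hq, div_eq_inv_mul, ← zpow_neg, ← inv_zpow', zpow_mul, zpow_mul]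
  simp [← pow_mul, mul_comm]

theorem Icoef_zero (q : ℝ) (m k : ℕ) : Icoef q m k 0 = pochDown q m k := by
  simp [Icoef, invSeries, PowerSeries.coeff_zero_eq_constantCoeff_apply, map_prod]

/-- The `t^b`-coefficient of `I(c)`, evaluated at `z^m`. -/
noncomputable def Iop (q : ℝ) (b m : ℕ) : ((ℕ × ℕ) →₀ ℂ) →ₗ[ℂ] ℂ[X] :=
  Finsupp.linearCombination ℂ fun jk =>
    if jk.2 ≤ m then Icoef q m jk.2 b • (X : ℂ[X]) ^ (m - jk.2 + jk.1) else 0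

theorem Qmap_X_pow (q : ℝ) (f : ℕ → (ℕ × ℕ) →₀ ℂ) (n m : ℕ) :
    Qmap q f n (X ^ m) = ∑ a ∈ range (n + 1), Iop q (n - a) m (f a) := by
  simp [Qmap, Iop, Finsupp.linearCombination_apply, Finsupp.sum, support_X_pow]

theorem coeff_Iop_zero {q : ℝ} {c : (ℕ × ℕ) →₀ ℂ} {m : ℕ} (hm : ∀ x ∈ c.support, x.2 ≤ m)
    {j₀ k₀ : ℕ} (hk₀ : k₀ ≤ m) :
    (Iop q 0 m c).coeff (m - k₀ + j₀) =
      ∑ x ∈ c.support with x.1 + k₀ = x.2 + j₀, c x * pochDown q m x.2 := by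
  rw [Iop, Finsupp.linearCombination_apply, Finsupp.sum, finsetSum_coeff, sum_filter]
  refine sum_congr rfl fun x hx => ?_
  have hxm := hm x hx
  rw [if_pos hxm, Icoef_zero, coeff_smul, coeff_smul, coeff_X_pow]
  by_cases h : x.1 + k₀ = x.2 + j₀
  · rw [if_pos (by omega), if_pos h, smul_eq_mul, smul_eq_mul, mul_one]
  · rw [if_neg (by omega), if_neg h, smul_zero, smul_zero]

theorem eq_zero_of_forall_Iop_zero_eq_zero {q : ℝ} (hq0 : 0 < q) (hq1 : q < 1)
    {c : (ℕ × ℕ) →₀ ℂ} (h : ∀ m, Iop q 0 m c = 0) : c = 0 := by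
  by_contra hc
  obtain ⟨⟨j₀, k₀⟩, hjk₀⟩ := Finsupp.support_nonempty_iff.2 hc
  have hq : (q : ℂ) ≠ 0 := Complex.ofReal_ne_zero.2 hq0.ne'
  set S := qPochhammerSeq (inv_ne_zero (pow_ne_zero 2 hq))
  set D := c.support.filter fun x => x.1 + k₀ = x.2 + j₀
  have hD : (j₀, k₀) ∈ D := mem_filter.2 ⟨hjk₀, Nat.add_comm j₀ k₀⟩
  have hinj : Set.InjOn Prod.snd (D : Set (ℕ × ℕ)) := fun x hx y hy hxy => by
    simp only [coe_filter, Set.mem_ofPred_eq, D] at hx hy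
    exact Prod.ext (by omega) hxy
  have hindep : LinearIndepOn ℂ (S ∘ Prod.snd) (D : Set (ℕ × ℕ)) :=
    (S.linearIndependent.linearIndepOn _).comp_of_image hinj
  have hpow : Function.Injective (((q : ℂ) ^ 2) ^ · : ℕ → ℂ) := fun a b hab =>
    pow_right_injective₀ (a := q ^ 2) (by positivity) (by nlinarith) <|
      Complex.ofReal_injective (by push_cast; exact hab)
  have hsum : ∑ x ∈ D, c x • S x.2 = 0 := by
    refine eq_zero_of_forall_eval_pow_eq_zero hpow (c.support.sup Prod.snd) fun m hm => ?_
    have hle : ∀ x ∈ c.support, x.2 ≤ m := fun x hx => (le_sup hx).trans hm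
    simp only [eval_finsetSum, eval_smul, smul_eq_mul, S, ← pochDown_eq_eval hq0]
    rw [← coeff_Iop_zero hle (hle _ hjk₀), h m, coeff_zero]
  exact Finsupp.mem_support_iff.1 hjk₀ (linearIndepOn_finset_iff.1 hindep c hsum _ hD)

/-- the `ℂ[[t]]`-linear extension `Q` of `I` to `Pol(ℂ)_q[[t]]` is
injective. -/
theorem Q_injective (q : ℝ) (hq0 : 0 < q) (hq1 : q < 1) :
    Function.Injective (Qmap q) := by
  intro f g hfg
  funext n
  induction n using Nat.strong_induction_on with
  | _ n ih =>
    have hlow : ∀ a ∈ range n, ∀ m, Iop q (n - a) m (f a) = Iop q (n - a) m (g a) :=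
      fun a ha m => by rw [ih a (mem_range.1 ha)]
    have hdiag : ∀ m, Iop q 0 m (f n - g n) = 0 := fun m => by
      have h := congrFun (congrFun hfg n) (X ^ m)
      rw [Qmap_X_pow, Qmap_X_pow, sum_range_succ, sum_range_succ,
        sum_congr rfl fun a ha => hlow a ha m, Nat.sub_self] at h
      rw [map_sub, add_left_cancel h, sub_self]
    exact sub_eq_zero.1 (eq_zero_of_forall_Iop_zero_eq_zero hq0 hq1 hdiag)
end

section
/- The C-antilinear involution on Pol(ℂ)_q[[t]] defined by (Σ f_j t^j)* = Σ f_j* t^j is an algebra involution for the *-product: m(ψ₁,ψ₂)* = m(ψ₂*, ψ₁*) for all ψ₁, ψ₂ ∈ Pol(ℂ)_q[[t]]. -/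
/-!
The `l`-th coefficient of `f * g` is `m₀ (P(□̃) (f ⊗ g))` with `P = p_l - p_{l-1}` a polynomial
with real coefficients (and `f g` for `l = 0`). The map `f ⊗ g ↦ g* ⊗ f*` is antilinear,
intertwines `m₀` with `*` because `(f g)* = g* f*`, and commutes with `□̃`: on elementary
tensors this reduces to `∂ʳ(f*)/∂z* = (∂f/∂z)*`, i.e. `σ (d f*).2 = ((d f).1)*`, which is
checked on the generators `z, z*` using the twisted Leibniz rule together with `σ ∘ φ = id` and
`(φ f)* = σ (f*)`. Hence it commutes with `P(□̃)`, so the coefficients satisfy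
`C_l(f, g)* = C_l(g*, f*)`, and the claim follows by exchanging the two summation indices of
the Cauchy product.
-/

open Finset Polynomial
open scoped TensorProduct

noncomputable instance instACGBoxT (q : ℝ) : AddCommGroup ((PolC q ⊗[ℂ] PolC q) →ₗ[ℂ] (PolC q ⊗[ℂ] PolC q)) :=
  @LinearMap.addCommGroup ℂ ℂ (PolC q ⊗[ℂ] PolC q) (PolC q ⊗[ℂ] PolC q) _ _ _ _ _ _ _

/-- The operator `□̃ : Pol(ℂ)_q^{⊗2} → Pol(ℂ)_q^{⊗2}`,
`□̃(f₁⊗f₂) = (∂⁽ʳ⁾f₁/∂z* ⊗ 1)·q⁻²(1⊗1 - (1+q⁻²)z*⊗z + q⁻²z*²⊗z²)·(1 ⊗ ∂⁽ˡ⁾f₂/∂z)`,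
built from the derivation `d` (whose components are the left partials) and the
algebra map `σ` converting left partials to right partials. -/
noncomputable def BoxT (q : ℝ) (σ : PolC q →ₐ[ℂ] PolC q)
    (d : PolC q →ₗ[ℂ] PolC q × PolC q) :
    (PolC q ⊗[ℂ] PolC q) →ₗ[ℂ] (PolC q ⊗[ℂ] PolC q) :=
  (((q : ℂ) ^ (-2 : ℤ)) • (LinearMap.id : (PolC q ⊗[ℂ] PolC q) →ₗ[ℂ] (PolC q ⊗[ℂ] PolC q))
      - ((q : ℂ) ^ (-2 : ℤ) * (1 + (q : ℂ) ^ (-2 : ℤ))) •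
          TensorProduct.map (LinearMap.mulRight ℂ (Pw q)) (LinearMap.mulLeft ℂ (Pz q))
      + ((q : ℂ) ^ (-4 : ℤ)) •
          TensorProduct.map (LinearMap.mulRight ℂ (Pw q ^ 2))
            (LinearMap.mulLeft ℂ (Pz q ^ 2))) ∘ₗ
    TensorProduct.map (σ.toLinearMap ∘ₗ LinearMap.snd ℂ (PolC q) (PolC q) ∘ₗ d)
      (LinearMap.fst ℂ (PolC q) (PolC q) ∘ₗ d)

/-- The polynomials `p_k` (with their real coefficients viewed in ℂ). -/
noncomputable def pkC (q : ℝ) (k : ℕ) : Polynomial ℂ :=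
  ∑ j ∈ range (k + 1),
    C ((∏ i ∈ range j, (1 - (q : ℂ) ^ (2 * (i : ℤ) - 2 * (k : ℤ)))) /
          (∏ i ∈ range j, (1 - (q : ℂ) ^ (2 * i + 2))) ^ 2 * (q : ℂ) ^ (2 * j)) *
      ∏ i ∈ range j,
        (C (1 - (q : ℂ) ^ (2 * i) * (1 + (q : ℂ) ^ 2) + (q : ℂ) ^ (4 * i + 2)) -
          C ((q : ℂ) ^ (2 * i) * (1 - (q : ℂ) ^ 2) ^ 2) * X)

/-- The `t`-coefficients of the star product `f₁*f₂ = f₁f₂ + Σ_{k≥1} C_k(f₁,f₂)tᵏ`,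
with `C_k = m₀ ∘ (p_k(□̃) - p_{k-1}(□̃))`. -/
noncomputable def starCoeff (q : ℝ) (σ : PolC q →ₐ[ℂ] PolC q)
    (d : PolC q →ₗ[ℂ] PolC q × PolC q) (f g : PolC q) : ℕ → PolC q :=
  fun l =>
    if l = 0 then f * g
    else
      LinearMap.mul' ℂ (PolC q)
        ((Polynomial.aeval (BoxT q σ d) (pkC q l - pkC q (l - 1))) (f ⊗ₜ[ℂ] g))

/-- The multiplication `m` on `Pol(ℂ)_q[[t]]` (formal series represented by their
coefficient sequences): `m(Σ a_j t^j, Σ b_k t^k) = Σ_i (Σ_{j+k=i} a_j * b_k) t^i`. -/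
noncomputable def mSer (q : ℝ) (σ : PolC q →ₐ[ℂ] PolC q)
    (d : PolC q →ₗ[ℂ] PolC q × PolC q) (f g : ℕ → PolC q) : ℕ → PolC q :=
  fun n =>
    ∑ j ∈ range (n + 1), ∑ k ∈ range (n + 1 - j),
      starCoeff q σ d (f j) (g k) (n - j - k)

section StarFlip

variable {R M : Type*} [CommRing R] [StarRing R] [AddCommGroup M] [Module R M]

def starFlipAddHom (s : M →ₗ⋆[R] M) : M ⊗[R] M →+ M ⊗[R] M :=
  TensorProduct.liftAddHom
    (AddMonoidHom.mk' (fun m => AddMonoidHom.mk' (fun n => s n ⊗ₜ[R] s m)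
      fun _ _ => by simp [TensorProduct.add_tmul])
      fun _ _ => by ext; simp [TensorProduct.tmul_add])
    fun c m n => by simp [TensorProduct.smul_tmul]

def starFlip (s : M →ₗ⋆[R] M) : M ⊗[R] M →ₗ⋆[R] M ⊗[R] M where
  toFun := starFlipAddHom s
  map_add' := map_add _
  map_smul' c x := by
    induction x using TensorProduct.induction_on with
    | zero => simp
    | tmul m n => simp [starFlipAddHom, TensorProduct.smul_tmul', TensorProduct.tmul_smul]
    | add x y hx hy => simp only [smul_add, map_add, hx, hy]

@[simp]
lemma starFlip_tmul (s : M →ₗ⋆[R] M) (m n : M) : starFlip s (m ⊗ₜ[R] n) = s n ⊗ₜ[R] s m := rfl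

lemma starFlip_aeval (s : M →ₗ⋆[R] M) (L : Module.End R (M ⊗[R] M))
    (hL : ∀ x, starFlip s (L x) = L (starFlip s x)) (P : R[X]) (x : M ⊗[R] M) :
    starFlip s (aeval L P x) = aeval L (P.map (starRingEnd R)) (starFlip s x) := by
  induction P using Polynomial.induction_on' with
  | add P Q hP hQ => simp only [map_add, Polynomial.map_add, LinearMap.add_apply, hP, hQ]
  | monomial n c =>
    have hLn : Function.Semiconj (starFlip s) ⇑(L ^ n) ⇑(L ^ n) := by
      rw [Module.End.coe_pow]; exact Function.Semiconj.iterate_right hL n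
    simp [aeval_monomial, hLn.eq]

end StarFlip

lemma mul'_starFlip {R A : Type*} [CommRing R] [StarRing R] [Ring A] [Algebra R A]
    (s : A →ₗ⋆[R] A) (hs : ∀ x y, s (x * y) = s y * s x) (x : A ⊗[R] A) :
    s (LinearMap.mul' R A x) = LinearMap.mul' R A (starFlip s x) := by
  induction x using TensorProduct.induction_on with
  | zero => simp
  | tmul a b => simp [hs]
  | add x y hx hy => simp only [map_add, hx, hy]

lemma map_one_of_antimul_involutive {A : Type*} [MulOneClass A] (s : A → A)
    (hmul : ∀ x y, s (x * y) = s y * s x) (hinv : Function.Involutive s) : s 1 = 1 :=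
  calc s 1 = s 1 * s (s 1) := by rw [hinv, mul_one]
    _ = s (s 1 * 1) := (hmul _ _).symm
    _ = 1 := by rw [mul_one, hinv]

lemma sum_range_sum_range_sub_comm {M : Type*} [AddCommMonoid M] (n : ℕ) (F : ℕ → ℕ → M) :
    ∑ j ∈ range (n + 1), ∑ k ∈ range (n + 1 - j), F j k
      = ∑ j ∈ range (n + 1), ∑ k ∈ range (n + 1 - j), F k j := by
  rw [← sum_range_diag_flip, ← sum_range_diag_flip]
  refine sum_congr rfl fun m _ => ?_
  rw [← sum_range_reflect]
  refine sum_congr rfl fun k hk => ?_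
  rw [mem_range] at hk
  congr 1; omega

namespace PolC

variable {q : ℝ}

lemma induction_on {P : PolC q → Prop} (one : P 1) (z : P (Pz q)) (w : P (Pw q))
    (smul : ∀ (c : ℂ) x, P x → P (c • x)) (mul : ∀ x y, P x → P y → P (x * y))
    (add : ∀ x y, P x → P y → P (x + y)) (x : PolC q) : P x := by
  obtain ⟨y, rfl⟩ := RingQuot.mkAlgHom_surjective ℂ (PolRel q) x
  induction y using FreeAlgebra.induction with
  | grade0 c => rw [AlgHom.commutes, Algebra.algebraMap_eq_smul_one]; exact smul c 1 one
  | grade1 i => fin_cases i; exacts [z, w]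
  | mul a b ha hb => rw [map_mul]; exact mul _ _ ha hb
  | add a b ha hb => rw [map_add]; exact add _ _ ha hb

lemma algHom_ext {A : Type*} [Semiring A] [Algebra ℂ A] {f g : PolC q →ₐ[ℂ] A}
    (hz : f (Pz q) = g (Pz q)) (hw : f (Pw q) = g (Pw q)) : f = g := by
  ext i
  fin_cases i
  exacts [hz, hw]

lemma leftInverse_of_map_generators (hq : q ≠ 0) (φ σ : PolC q →ₐ[ℂ] PolC q)
    (hφz : φ (Pz q) = ((q : ℂ) ^ (-2 : ℤ)) • Pz q)
    (hφw : φ (Pw q) = ((q : ℂ) ^ (2 : ℤ)) • Pw q)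
    (hσz : σ (Pz q) = ((q : ℂ) ^ (2 : ℤ)) • Pz q)
    (hσw : σ (Pw q) = ((q : ℂ) ^ (-2 : ℤ)) • Pw q) :
    Function.LeftInverse σ φ := by
  have hq' : (q : ℂ) ≠ 0 := by exact_mod_cast hq
  have h : σ.comp φ = AlgHom.id ℂ (PolC q) := algHom_ext
    (by simp [hφz, hσz, smul_smul, hq']) (by simp [hφw, hσw, smul_smul, hq'])
  exact fun x => AlgHom.congr_fun h x

lemma semiconj_star (s : PolC q →ₗ⋆[ℂ] PolC q) (hs_mul : ∀ x y, s (x * y) = s y * s x)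
    (hs_one : s 1 = 1) (hs_z : s (Pz q) = Pw q) (hs_w : s (Pw q) = Pz q)
    (φ σ : PolC q →ₐ[ℂ] PolC q)
    (hφz : φ (Pz q) = ((q : ℂ) ^ (-2 : ℤ)) • Pz q)
    (hφw : φ (Pw q) = ((q : ℂ) ^ (2 : ℤ)) • Pw q)
    (hσz : σ (Pz q) = ((q : ℂ) ^ (2 : ℤ)) • Pz q)
    (hσw : σ (Pw q) = ((q : ℂ) ^ (-2 : ℤ)) • Pw q) :
    Function.Semiconj s φ σ := by
  intro x
  induction x using induction_on with
  | one => simp [hs_one]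
  | z => simp [hφz, hσw, hs_z]
  | w => simp [hφw, hσz, hs_w]
  | smul c x hx => simp [hx]
  | mul x y hx hy => simp [hs_mul, hx, hy]
  | add x y hx hy => simp [hx, hy]

lemma rightPartial_star (s : PolC q →ₗ⋆[ℂ] PolC q) (hs_mul : ∀ x y, s (x * y) = s y * s x)
    (hs_one : s 1 = 1) (hs_z : s (Pz q) = Pw q) (hs_w : s (Pw q) = Pz q)
    (φ σ : PolC q →ₐ[ℂ] PolC q) (hσφ : Function.LeftInverse σ φ)
    (hsφ : Function.Semiconj s φ σ) (d : PolC q →ₗ[ℂ] PolC q × PolC q)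
    (hdz : d (Pz q) = (1, 0)) (hdw : d (Pw q) = (0, 1))
    (hLeib : ∀ f g : PolC q,
      d (f * g) = ((d f).1 * g + φ f * (d g).1, (d f).2 * g + φ f * (d g).2)) (f : PolC q) :
    σ (d (s f)).2 = s (d f).1 := by
  have hd1 : d 1 = 0 := by
    have h := hLeib 1 1
    simp only [mul_one, one_mul, map_one] at h
    exact left_eq_add.mp h
  induction f using induction_on with
  | one => simp [hs_one, hd1]
  | z => simp [hs_z, hdz, hdw, hs_one]
  | w => simp [hs_w, hdz, hdw]
  | smul c x hx => simp [hx]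
  | mul x y hx hy =>
    rw [hs_mul, hLeib, hLeib, map_add, map_mul, map_mul, map_add, hs_mul, hs_mul, hx, hy,
      hσφ, hsφ.eq, add_comm]
  | add x y hx hy => simp [hx, hy]

lemma boxT_tmul (σ : PolC q →ₐ[ℂ] PolC q) (d : PolC q →ₗ[ℂ] PolC q × PolC q) (f g : PolC q) :
    BoxT q σ d (f ⊗ₜ[ℂ] g) =
      ((q : ℂ) ^ (-2 : ℤ)) • (σ (d f).2 ⊗ₜ[ℂ] (d g).1)
        - ((q : ℂ) ^ (-2 : ℤ) * (1 + (q : ℂ) ^ (-2 : ℤ))) •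
            ((σ (d f).2 * Pw q) ⊗ₜ[ℂ] (Pz q * (d g).1))
        + ((q : ℂ) ^ (-4 : ℤ)) • ((σ (d f).2 * Pw q ^ 2) ⊗ₜ[ℂ] (Pz q ^ 2 * (d g).1)) :=
  rfl

lemma starFlip_boxT (s : PolC q →ₗ⋆[ℂ] PolC q) (hs_mul : ∀ x y, s (x * y) = s y * s x)
    (hs_inv : Function.Involutive s) (hs_z : s (Pz q) = Pw q) (hs_w : s (Pw q) = Pz q)
    (σ : PolC q →ₐ[ℂ] PolC q) (d : PolC q →ₗ[ℂ] PolC q × PolC q)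
    (hds : ∀ f, σ (d (s f)).2 = s (d f).1) (x : PolC q ⊗[ℂ] PolC q) :
    starFlip s (BoxT q σ d x) = BoxT q σ d (starFlip s x) := by
  induction x using TensorProduct.induction_on with
  | zero => simp
  | tmul f g =>
    have hds' : (d (s f)).1 = s (σ (d f).2) := by
      simpa only [hs_inv f, hs_inv _] using (congrArg s (hds (s f))).symm
    simp [boxT_tmul, hds, hds', hs_mul, hs_z, hs_w, pow_two]
  | add x y hx hy => simp only [map_add, hx, hy]

lemma pkC_map_conj (k : ℕ) : (pkC q k).map (starRingEnd ℂ) = pkC q k := by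
  simp [pkC, Polynomial.map_sum, Polynomial.map_prod, map_zpow₀]

lemma star_starCoeff (s : PolC q →ₗ⋆[ℂ] PolC q) (hs_mul : ∀ x y, s (x * y) = s y * s x)
    (σ : PolC q →ₐ[ℂ] PolC q) (d : PolC q →ₗ[ℂ] PolC q × PolC q)
    (hbox : ∀ x, starFlip s (BoxT q σ d x) = BoxT q σ d (starFlip s x)) (f g : PolC q) (l : ℕ) :
    s (starCoeff q σ d f g l) = starCoeff q σ d (s g) (s f) l := by
  unfold starCoeff
  split_ifs
  · exact hs_mul f g
  · rw [mul'_starFlip s hs_mul, starFlip_aeval s _ hbox, Polynomial.map_sub, pkC_map_conj,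
      pkC_map_conj, starFlip_tmul]

end PolC

theorem star_product_involution_general (q : ℝ) (hq0 : 0 < q)
    (φ σ : PolC q →ₐ[ℂ] PolC q)
    (hφz : φ (Pz q) = ((q : ℂ) ^ (-2 : ℤ)) • Pz q)
    (hφw : φ (Pw q) = ((q : ℂ) ^ (2 : ℤ)) • Pw q)
    (hσz : σ (Pz q) = ((q : ℂ) ^ (2 : ℤ)) • Pz q)
    (hσw : σ (Pw q) = ((q : ℂ) ^ (-2 : ℤ)) • Pw q)
    (d : PolC q →ₗ[ℂ] PolC q × PolC q)
    (hdz : d (Pz q) = (1, 0))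
    (hdw : d (Pw q) = (0, 1))
    (hLeib : ∀ f g : PolC q,
      d (f * g) = ((d f).1 * g + φ f * (d g).1, (d f).2 * g + φ f * (d g).2))
    (st : PolC q → PolC q)
    (hst_add : ∀ x y : PolC q, st (x + y) = st x + st y)
    (hst_smul : ∀ (c : ℂ) (x : PolC q), st (c • x) = (starRingEnd ℂ) c • st x)
    (hst_mul : ∀ x y : PolC q, st (x * y) = st y * st x)
    (hst_inv : ∀ x : PolC q, st (st x) = x)
    (hst_z : st (Pz q) = Pw q)
    (hst_w : st (Pw q) = Pz q) :
    ∀ ψ₁ ψ₂ : ℕ → PolC q,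
      (fun n => st (mSer q σ d ψ₁ ψ₂ n)) =
        mSer q σ d (fun n => st (ψ₂ n)) (fun n => st (ψ₁ n)) := by
  intro ψ₁ ψ₂
  let s : PolC q →ₗ⋆[ℂ] PolC q := { toFun := st, map_add' := hst_add, map_smul' := hst_smul }
  have hs_one : s 1 = 1 := map_one_of_antimul_involutive st hst_mul hst_inv
  have hσφ := PolC.leftInverse_of_map_generators hq0.ne' φ σ hφz hφw hσz hσw
  have hsφ := PolC.semiconj_star s hst_mul hs_one hst_z hst_w φ σ hφz hφw hσz hσw
  have hds := PolC.rightPartial_star s hst_mul hs_one hst_z hst_w φ σ hσφ hsφ d hdz hdw hLeib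
  have hbox := PolC.starFlip_boxT s hst_mul hst_inv hst_z hst_w σ d hds
  funext n
  calc s (mSer q σ d ψ₁ ψ₂ n)
      = ∑ j ∈ range (n + 1), ∑ k ∈ range (n + 1 - j),
          starCoeff q σ d (s (ψ₂ k)) (s (ψ₁ j)) (n - k - j) := by
        simp only [mSer, map_sum, PolC.star_starCoeff s hst_mul σ d hbox, Nat.sub_right_comm n]
    _ = mSer q σ d (fun n => s (ψ₂ n)) (fun n => s (ψ₁ n)) n :=
        (sum_range_sum_range_sub_comm n _).symm

/-- the coefficientwise involution `(Σ f_j t^j)* = Σ f_j* t^j` on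
`Pol(ℂ)_q[[t]]` is an algebra involution for the star product:
`m(ψ₁,ψ₂)* = m(ψ₂*, ψ₁*)`.  Here `st` is the standard antilinear involution of
`Pol(ℂ)_q` (interchanging `z` and `z*`). -/
theorem star_product_involution (q : ℝ) (hq0 : 0 < q) (hq1 : q < 1)
    (φ σ : PolC q →ₐ[ℂ] PolC q)
    (hφz : φ (Pz q) = ((q : ℂ) ^ (-2 : ℤ)) • Pz q)
    (hφw : φ (Pw q) = ((q : ℂ) ^ (2 : ℤ)) • Pw q)
    (hσz : σ (Pz q) = ((q : ℂ) ^ (2 : ℤ)) • Pz q)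
    (hσw : σ (Pw q) = ((q : ℂ) ^ (-2 : ℤ)) • Pw q)
    (d : PolC q →ₗ[ℂ] PolC q × PolC q)
    (hdz : d (Pz q) = (1, 0))
    (hdw : d (Pw q) = (0, 1))
    (hLeib : ∀ f g : PolC q,
      d (f * g) = ((d f).1 * g + φ f * (d g).1, (d f).2 * g + φ f * (d g).2))
    (st : PolC q → PolC q)
    (hst_add : ∀ x y : PolC q, st (x + y) = st x + st y)
    (hst_smul : ∀ (c : ℂ) (x : PolC q), st (c • x) = (starRingEnd ℂ) c • st x)
    (hst_mul : ∀ x y : PolC q, st (x * y) = st y * st x)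
    (hst_inv : ∀ x : PolC q, st (st x) = x)
    (hst_z : st (Pz q) = Pw q)
    (hst_w : st (Pw q) = Pz q) :
    ∀ ψ₁ ψ₂ : ℕ → PolC q,
      (fun n => st (mSer q σ d ψ₁ ψ₂ n)) =
        mSer q σ d (fun n => st (ψ₂ n)) (fun n => st (ψ₁ n)) :=
  star_product_involution_general q hq0 φ σ hφz hφw hσz hσw d hdz hdw hLeib st hst_add hst_smul
    hst_mul hst_inv hst_z hst_w
end
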